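/- Let A, B ∈ ℝ² with A ≠ B, let ℓ = ‖B - A‖, and let M(t) = (1-t)A + tB. Let μ be the uniform probability measure on segment AB (pushforward of Lebesgue measure on [0,1] under M). For 0 ≤ r₁, with r₁ + r₂ < ℓ, the nth quantization error of μ restricted (conditioned) to the subsegment from M(r₁/ℓ) to M(1 - r₂/ℓ), with respect to the squared Euclidean distance, equals n · ∫ over t from r₁/ℓ to r₁/ℓ + (1/n)(1 - r₂/ℓ - r₁/ℓ) of ‖M(t) - M(r₁/ℓ + (1/(2n))(1 - r₂/ℓ - r₁/ℓ))‖² dt, and the set {M(r₁/ℓ + ((2j-1)/(2n))(1 - r₂/ℓ - r₁/ℓ)) : 1 ≤ j ≤ n} achieves this infimum. -/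

import Mathlib

/-!
Projecting a codebook orthogonally onto the line `AB` moves no centre farther from any point of
the segment, so the problem reduces, up to the factor `‖B - A‖²`, to quantizing the uniform
distribution on a parameter interval `[t₀, t₁]`. There, induction on the number of centres,
splitting the interval at the midpoint between the two largest ones, gives the lower bound
`(t₁ - t₀)³ / (12 n²)` by convexity of `x ↦ x³`; the midpoints of the `n` equal cells attain it,
each cell contributing `((t₁ - t₀) / n)³ / 12`.
-/

open MeasureTheory

theorem integral_sq_sub (a b p : ℝ) :
    ∫ t in a..b, (t - p) ^ 2 = ((b - p) ^ 3 - (a - p) ^ 3) / 3 := by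
  rw [intervalIntegral.integral_comp_sub_right (fun x => x ^ 2), integral_pow]
  ring

theorem integral_sq_sub_midpoint (a b : ℝ) :
    ∫ t in a..b, (t - (a + b) / 2) ^ 2 = (b - a) ^ 3 / 12 := by
  rw [integral_sq_sub]
  ring

theorem cube_div_twelve_le_integral_sq_sub {a b : ℝ} (hab : a ≤ b) (p : ℝ) :
    (b - a) ^ 3 / 12 ≤ ∫ t in a..b, (t - p) ^ 2 := by
  rw [integral_sq_sub]
  nlinarith [mul_nonneg (sub_nonneg.mpr hab) (sq_nonneg (b + a - 2 * p))]

theorem sq_sub_le_sq_sub_of_le_midpoint {p q t : ℝ} (hpq : p ≤ q) (ht : t ≤ (p + q) / 2) :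
    (t - p) ^ 2 ≤ (t - q) ^ 2 := by
  nlinarith

theorem sq_sub_le_sq_sub_of_midpoint_le {p q t : ℝ} (hpq : p ≤ q) (ht : (p + q) / 2 ≤ t) :
    (t - q) ^ 2 ≤ (t - p) ^ 2 := by
  nlinarith

/-- Convexity of `x ↦ x³` for the weights `m / (m + 1)` and `1 / (m + 1)`. -/
theorem add_pow_three_div_le {X Y m : ℝ} (hX : 0 ≤ X) (hY : 0 ≤ Y) (hm : 0 < m) :
    (X + Y) ^ 3 / (12 * (m + 1) ^ 2) ≤ X ^ 3 / (12 * m ^ 2) + Y ^ 3 / 12 := by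
  rw [div_add_div _ _ (by positivity) (by norm_num),
    div_le_div_iff₀ (by positivity) (by positivity)]
  nlinarith [mul_nonneg (sq_nonneg (X - m * Y))
    (add_nonneg (mul_nonneg (by linarith : (0:ℝ) ≤ 2 * m + 1) hX)
      (mul_nonneg (by nlinarith : (0:ℝ) ≤ m * (m + 2)) hY))]

theorem continuous_inf'_sq_sub (P : Finset ℝ) (hP : P.Nonempty) :
    Continuous fun t : ℝ => P.inf' hP fun p => (t - p) ^ 2 :=
  Continuous.finset_inf'_apply hP fun _ _ => by fun_prop

theorem cube_div_le_integral_inf'_sq_sub_card (P : Finset ℝ) (hP : P.Nonempty) {a b : ℝ}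
    (hab : a ≤ b) :
    (b - a) ^ 3 / (12 * (P.card : ℝ) ^ 2) ≤ ∫ t in a..b, P.inf' hP fun p => (t - p) ^ 2 := by
  induction P using Finset.induction_on_max generalizing a b with
  | empty => exact absurd hP Finset.not_nonempty_empty
  | insert q s hlt ih =>
    rcases s.eq_empty_or_nonempty with rfl | hs
    · simpa using cube_div_twelve_le_integral_sq_sub hab q
    set p := s.max' hs
    have hpq : p ≤ q := (hlt p (s.max'_mem hs)).le
    -- left of `c` the new centre `q` is never closer than `p`, right of `c` it is the closest
    set c := max a (min b ((p + q) / 2))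
    have hac : a ≤ c := le_max_left _ _
    have hcb : c ≤ b := max_le hab (min_le_left _ _)
    have left : (c - a) ^ 3 / (12 * (s.card : ℝ) ^ 2)
        ≤ ∫ t in a..c, (insert q s).inf' hP fun x => (t - x) ^ 2 := by
      refine (ih hs hac).trans <| intervalIntegral.integral_mono_on_of_le_Ioo hac
        ((continuous_inf'_sq_sub _ _).intervalIntegrable _ _)
        ((continuous_inf'_sq_sub _ _).intervalIntegrable _ _) fun t ht => ?_
      have htm : t ≤ (p + q) / 2 :=
        (lt_min_iff.mp <| (lt_max_iff.mp ht.2).resolve_left ht.1.le.not_gt).2.le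
      rw [Finset.inf'_insert (H := hs)]
      exact le_min ((Finset.inf'_le _ (s.max'_mem hs)).trans
        (sq_sub_le_sq_sub_of_le_midpoint hpq htm)) le_rfl
    have right : (b - c) ^ 3 / 12 ≤ ∫ t in c..b, (insert q s).inf' hP fun x => (t - x) ^ 2 := by
      refine (cube_div_twelve_le_integral_sq_sub hcb q).trans <|
        intervalIntegral.integral_mono_on_of_le_Ioo hcb
        (Continuous.intervalIntegrable (by fun_prop) _ _)
        ((continuous_inf'_sq_sub _ _).intervalIntegrable _ _) fun t ht => ?_
      have htm : (p + q) / 2 ≤ t :=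
        (min_lt_iff.mp <| (le_max_right _ _).trans_lt ht.1).resolve_left ht.2.not_gt |>.le
      refine Finset.le_inf' _ _ fun x hx => ?_
      rcases Finset.mem_insert.mp hx with rfl | hx
      · exact le_rfl
      · have hxp : x ≤ p := s.le_max' x hx
        exact (sq_sub_le_sq_sub_of_midpoint_le hpq htm).trans
          (sq_sub_le_sq_sub_of_midpoint_le hxp (by linarith))
    have hcard : (insert q s).card = s.card + 1 :=
      Finset.card_insert_of_notMem fun hq => (hlt q hq).false
    have hs_card : (0 : ℝ) < s.card := by exact_mod_cast hs.card_pos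
    rw [← intervalIntegral.integral_add_adjacent_intervals
      ((continuous_inf'_sq_sub _ _).intervalIntegrable a c)
      ((continuous_inf'_sq_sub _ _).intervalIntegrable c b), hcard, Nat.cast_succ]
    calc (b - a) ^ 3 / (12 * ((s.card : ℝ) + 1) ^ 2)
        = ((c - a) + (b - c)) ^ 3 / (12 * ((s.card : ℝ) + 1) ^ 2) := by ring_nf
      _ ≤ (c - a) ^ 3 / (12 * (s.card : ℝ) ^ 2) + (b - c) ^ 3 / 12 :=
        add_pow_three_div_le (by linarith) (by linarith) hs_card
      _ ≤ _ := add_le_add left right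

theorem cube_div_le_integral_inf'_sq_sub (P : Finset ℝ) (hP : P.Nonempty) {a b : ℝ}
    (hab : a ≤ b) {n : ℕ} (hcard : P.card ≤ n) :
    (b - a) ^ 3 / (12 * (n : ℝ) ^ 2) ≤ ∫ t in a..b, P.inf' hP fun p => (t - p) ^ 2 :=
  (div_le_div_of_nonneg_left (pow_nonneg (sub_nonneg.mpr hab) 3)
    (by have := hP.card_pos; positivity) (by gcongr)).trans
    (cube_div_le_integral_inf'_sq_sub_card P hP hab)

theorem integral_inf'_sq_sub_midpoints_le {a b : ℝ} (hab : a ≤ b) {n : ℕ} (hn : 1 ≤ n) :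
    ∫ t in a..b, (Finset.Icc 1 n).inf' (Finset.nonempty_Icc.mpr hn)
        (fun j : ℕ => (t - (a + (2 * (j : ℝ) - 1) / (2 * n) * (b - a))) ^ 2)
      ≤ (b - a) ^ 3 / (12 * (n : ℝ) ^ 2) := by
  set f := fun t : ℝ => (Finset.Icc 1 n).inf' (Finset.nonempty_Icc.mpr hn)
    (fun j : ℕ => (t - (a + (2 * (j : ℝ) - 1) / (2 * n) * (b - a))) ^ 2)
  have hf : Continuous f := Continuous.finset_inf'_apply _ fun _ _ => by fun_prop
  have hn' : (0 : ℝ) < n := by exact_mod_cast hn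
  set u := (b - a) / n
  set F : ℕ → ℝ := fun i => a + i * u
  have hcell : ∀ i ∈ Finset.range n, ∫ t in F i..F (i + 1), f t ≤ u ^ 3 / 12 := fun i hi => by
    have hmid : a + (2 * ((i + 1 : ℕ) : ℝ) - 1) / (2 * n) * (b - a) = (F i + F (i + 1)) / 2 := by
      simp only [F, u, Nat.cast_succ]; field_simp; ring
    have hu : F (i + 1) - F i = u := by simp only [F, Nat.cast_succ]; ring
    calc ∫ t in F i..F (i + 1), f t
        ≤ ∫ t in F i..F (i + 1), (t - (F i + F (i + 1)) / 2) ^ 2 :=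
          intervalIntegral.integral_mono_on (by linarith [div_nonneg (sub_nonneg.mpr hab) hn'.le])
            (hf.intervalIntegrable _ _) (Continuous.intervalIntegrable (by fun_prop) _ _)
            fun t _ => by
              rw [← hmid]
              exact Finset.inf'_le _ (Finset.mem_Icc.mpr ⟨by omega, Finset.mem_range.mp hi⟩)
      _ = u ^ 3 / 12 := by rw [integral_sq_sub_midpoint, hu]
  have hsum := intervalIntegral.sum_integral_adjacent_intervals (a := F) (n := n) (μ := volume)
    fun i _ => hf.intervalIntegrable _ _
  have hF0 : F 0 = a := by simp [F]
  have hFn : F n = b := by simp only [F, u]; field_simp; ring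
  rw [hF0, hFn] at hsum
  calc ∫ t in a..b, f t = ∑ i ∈ Finset.range n, ∫ t in F i..F (i + 1), f t := hsum.symm
    _ ≤ ∑ _i ∈ Finset.range n, u ^ 3 / 12 := Finset.sum_le_sum hcell
    _ = (b - a) ^ 3 / (12 * (n : ℝ) ^ 2) := by
      simp only [Finset.sum_const, Finset.card_range, nsmul_eq_mul, u]; field_simp

theorem ciInf_finset_eq_inf' {ι α : Type*} [ConditionallyCompleteLattice α] (s : Finset ι)
    (hs : s.Nonempty) (f : ι → α) :
    ⨅ i : s, f i = s.inf' hs f := by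
  rw [Finset.inf'_eq_csInf_image, Set.image_eq_range, iInf]; rfl

theorem integral_iInf_norm_sub_sq_map {E : Type*} [NormedAddCommGroup E]
    [MeasurableSpace E] [BorelSpace E] {γ : ℝ → E}
    (hγ : Continuous γ) {t₀ t₁ : ℝ} (h01 : t₀ ≤ t₁) (α : Finset E) (hα : α.Nonempty) :
    ∫ x, (⨅ a : α, ‖x - (a : E)‖ ^ 2) ∂(volume.restrict (Set.Icc t₀ t₁)).map γ
      = ∫ t in t₀..t₁, α.inf' hα fun a => ‖γ t - a‖ ^ 2 := by
  have hinf : (fun x : E => ⨅ a : α, ‖x - (a : E)‖ ^ 2)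
      = fun x => α.inf' hα fun a => ‖x - a‖ ^ 2 :=
    funext fun x => ciInf_finset_eq_inf' α hα fun a => ‖x - a‖ ^ 2
  rw [hinf, integral_map hγ.aemeasurable
    (Continuous.finset_inf'_apply hα fun _ _ => by fun_prop).aestronglyMeasurable,
    integral_Icc_eq_integral_Ioc, intervalIntegral.integral_of_le h01]

section
variable {E : Type*} [NormedAddCommGroup E] [InnerProductSpace ℝ E]

open AffineMap

noncomputable def lineProjectionParam (A B a : E) : ℝ := inner ℝ (a - A) (B - A) / ‖B - A‖ ^ 2

theorem norm_sub_sq_mul_sq_sub_lineProjectionParam_le (A B a : E) (t : ℝ) :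
    ‖B - A‖ ^ 2 * (t - lineProjectionParam A B a) ^ 2 ≤ ‖lineMap A B t - a‖ ^ 2 := by
  rcases eq_or_ne B A with rfl | hBA
  · simp
  have hv : 0 < ‖B - A‖ := norm_pos_iff.mpr (sub_ne_zero.mpr hBA)
  have hinner :
      inner ℝ (lineMap A B t - a) (B - A) = (t - lineProjectionParam A B a) * ‖B - A‖ ^ 2 := by
    rw [lineMap_apply, vsub_eq_sub, vadd_eq_add,
      show t • (B - A) + A - a = t • (B - A) - (a - A) by abel, inner_sub_left,
      real_inner_smul_left, real_inner_self_eq_norm_sq, lineProjectionParam]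
    field_simp
  have hcs := abs_real_inner_le_norm (lineMap A B t - a) (B - A)
  rw [hinner, abs_mul, abs_of_pos (by positivity : 0 < ‖B - A‖ ^ 2), sq, ← mul_assoc,
    mul_le_mul_iff_left₀ hv] at hcs
  calc ‖B - A‖ ^ 2 * (t - lineProjectionParam A B a) ^ 2
        = (|t - lineProjectionParam A B a| * ‖B - A‖) ^ 2 := by rw [mul_pow, sq_abs, mul_comm]
    _ ≤ ‖lineMap A B t - a‖ ^ 2 := pow_le_pow_left₀ (by positivity) hcs 2

theorem norm_lineMap_sub_lineMap_sq (A B : E) (t s : ℝ) :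
    ‖lineMap A B t - lineMap A B s‖ ^ 2 = ‖B - A‖ ^ 2 * (t - s) ^ 2 := by
  rw [← dist_eq_norm, dist_lineMap_lineMap, dist_comm A B, dist_eq_norm, dist_eq_norm,
    Real.norm_eq_abs, mul_pow, sq_abs, mul_comm]

theorem setIntegral_norm_lineMap_sub_midpoint_sq (A B : E) {t₀ t₁ : ℝ} (h01 : t₀ ≤ t₁) :
    ∫ t in Set.Icc t₀ t₁, ‖lineMap A B t - lineMap A B ((t₀ + t₁) / 2)‖ ^ 2
      = ‖B - A‖ ^ 2 * ((t₁ - t₀) ^ 3 / 12) := by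
  simp_rw [norm_lineMap_sub_lineMap_sq]
  rw [integral_Icc_eq_integral_Ioc, ← intervalIntegral.integral_of_le h01,
    intervalIntegral.integral_const_mul, integral_sq_sub_midpoint]

theorem cube_div_le_integral_inf'_norm_lineMap_sub_sq (A B : E) {t₀ t₁ : ℝ} (h01 : t₀ ≤ t₁)
    (α : Finset E) (hα : α.Nonempty) {n : ℕ} (hcard : α.card ≤ n) :
    ‖B - A‖ ^ 2 * ((t₁ - t₀) ^ 3 / (12 * (n : ℝ) ^ 2))
      ≤ ∫ t in t₀..t₁, α.inf' hα fun a => ‖lineMap A B t - a‖ ^ 2 := by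
  set P := α.image (lineProjectionParam A B)
  have hP : P.Nonempty := hα.image _
  refine (mul_le_mul_of_nonneg_left (cube_div_le_integral_inf'_sq_sub P hP h01
    (Finset.card_image_le.trans hcard)) (sq_nonneg _)).trans ?_
  rw [← intervalIntegral.integral_const_mul]
  refine intervalIntegral.integral_mono_on h01
    ((continuous_inf'_sq_sub P hP).intervalIntegrable _ _ |>.const_mul _)
    ((Continuous.finset_inf'_apply hα fun _ _ => by fun_prop).intervalIntegrable _ _)
    fun t _ => Finset.le_inf' _ _ fun a ha => ?_
  exact (mul_le_mul_of_nonneg_left (Finset.inf'_le _ (Finset.mem_image_of_mem _ ha))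
    (sq_nonneg _)).trans (norm_sub_sq_mul_sq_sub_lineProjectionParam_le A B a t)

theorem integral_inf'_norm_lineMap_sub_midpoints_le [DecidableEq E] (A B : E) {t₀ t₁ : ℝ}
    (h01 : t₀ ≤ t₁) {n : ℕ} (hn : 1 ≤ n) :
    ∫ t in t₀..t₁, ((Finset.Icc 1 n).image
        fun j : ℕ => lineMap A B (t₀ + (2 * (j : ℝ) - 1) / (2 * n) * (t₁ - t₀))).inf'
        ((Finset.nonempty_Icc.mpr hn).image _) (fun a => ‖lineMap A B t - a‖ ^ 2)
      ≤ ‖B - A‖ ^ 2 * ((t₁ - t₀) ^ 3 / (12 * (n : ℝ) ^ 2)) := by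
  refine le_trans ?_ (mul_le_mul_of_nonneg_left (integral_inf'_sq_sub_midpoints_le h01 hn)
    (sq_nonneg _))
  rw [← intervalIntegral.integral_const_mul]
  refine intervalIntegral.integral_mono_on h01
    ((Continuous.finset_inf'_apply _ fun _ _ => by fun_prop).intervalIntegrable _ _)
    (((Continuous.finset_inf'_apply _ fun _ _ => by fun_prop).intervalIntegrable _ _).const_mul _)
    fun t _ => ?_
  obtain ⟨j, hj, hjmin⟩ := Finset.exists_mem_eq_inf' (Finset.nonempty_Icc.mpr hn)
    fun j : ℕ => (t - (t₀ + (2 * (j : ℝ) - 1) / (2 * n) * (t₁ - t₀))) ^ 2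
  rw [hjmin, ← norm_lineMap_sub_lineMap_sq]
  exact Finset.inf'_le _ (Finset.mem_image_of_mem _ hj)

end

theorem quantization_uniform_subsegment_general
    (A B : EuclideanSpace ℝ (Fin 2)) (hAB : A ≠ B) (ℓ r₁ r₂ : ℝ)
    (hℓ : ℓ = ‖B - A‖) (hr : r₁ + r₂ < ℓ)
    (M : ℝ → EuclideanSpace ℝ (Fin 2)) (hM : ∀ t, M t = (1 - t) • A + t • B)
    (n : ℕ) (hn : 1 ≤ n)
    (μ : Measure (EuclideanSpace ℝ (Fin 2)))
    (hμ : μ = Measure.map M (volume.restrict (Set.Icc (r₁ / ℓ) (1 - r₂ / ℓ)))) :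
    (∫ x, (⨅ a : ((Finset.Icc 1 n).image
          (fun j : ℕ => M (r₁ / ℓ + (2 * (j : ℝ) - 1) / (2 * n) * (1 - r₂ / ℓ - r₁ / ℓ))) :
          Finset (EuclideanSpace ℝ (Fin 2))),
        ‖x - (a : EuclideanSpace ℝ (Fin 2))‖ ^ 2) ∂μ)
      = n * ∫ t in Set.Icc (r₁ / ℓ) (r₁ / ℓ + (1 / n) * (1 - r₂ / ℓ - r₁ / ℓ)),
          ‖M t - M (r₁ / ℓ + (1 / (2 * n)) * (1 - r₂ / ℓ - r₁ / ℓ))‖ ^ 2 ∧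
    ∀ α : Finset (EuclideanSpace ℝ (Fin 2)), α.Nonempty → α.card ≤ n →
      (n : ℝ) * ∫ t in Set.Icc (r₁ / ℓ) (r₁ / ℓ + (1 / n) * (1 - r₂ / ℓ - r₁ / ℓ)),
          ‖M t - M (r₁ / ℓ + (1 / (2 * n)) * (1 - r₂ / ℓ - r₁ / ℓ))‖ ^ 2
        ≤ ∫ x, (⨅ a : α, ‖x - (a : EuclideanSpace ℝ (Fin 2))‖ ^ 2) ∂μ := by
  have hℓ0 : 0 < ℓ := hℓ ▸ norm_pos_iff.mpr (sub_ne_zero.mpr hAB.symm)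
  obtain rfl : M = AffineMap.lineMap A B :=
    funext fun t => (hM t).trans (AffineMap.lineMap_apply_module A B t).symm
  subst hμ
  set t₀ := r₁ / ℓ
  set t₁ := 1 - r₂ / ℓ
  have h01 : t₀ ≤ t₁ := by
    have := (div_lt_one hℓ0).mpr hr
    rw [add_div] at this
    linarith
  have hrhs : n * ∫ t in Set.Icc t₀ (t₀ + 1 / n * (t₁ - t₀)),
      ‖AffineMap.lineMap A B t - AffineMap.lineMap A B (t₀ + 1 / (2 * n) * (t₁ - t₀))‖ ^ 2
      = ‖B - A‖ ^ 2 * ((t₁ - t₀) ^ 3 / (12 * (n : ℝ) ^ 2)) := by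
    have hn0 : (0 : ℝ) < n := by exact_mod_cast hn
    have hmid : t₀ + 1 / (2 * n) * (t₁ - t₀) = (t₀ + (t₀ + 1 / n * (t₁ - t₀))) / 2 := by ring
    rw [hmid, setIntegral_norm_lineMap_sub_midpoint_sq A B
      (le_add_of_nonneg_right (mul_nonneg (by positivity) (sub_nonneg.mpr h01)))]
    field_simp; ring
  have hL : Continuous (AffineMap.lineMap A B : ℝ → EuclideanSpace ℝ (Fin 2)) :=
    AffineMap.lineMap_continuous
  have hI := (Finset.nonempty_Icc.mpr hn).image fun j : ℕ =>
    AffineMap.lineMap A B (t₀ + (2 * (j : ℝ) - 1) / (2 * n) * (t₁ - t₀))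
  rw [hrhs, integral_iInf_norm_sub_sq_map hL h01 _ hI]
  refine ⟨le_antisymm (integral_inf'_norm_lineMap_sub_midpoints_le A B h01 hn)
    (cube_div_le_integral_inf'_norm_lineMap_sub_sq A B h01 _ hI
      (Finset.card_image_le.trans (by simp))), fun α hα hcard => ?_⟩
  rw [integral_iInf_norm_sub_sq_map hL h01 α hα]
  exact cube_div_le_integral_inf'_norm_lineMap_sub_sq A B h01 α hα hcard

/-- Theorem 1 of the paper: for the uniform distribution on a segment `AB` restricted to
the subsegment from `M(r₁/ℓ)` to `M(1 - r₂/ℓ)` (where `M(t) = (1-t)A + tB` and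
`ℓ = ‖B - A‖`), the `n`th quantization error equals
`n ∫_{r₁/ℓ}^{r₁/ℓ + (1/n)(1 - r₂/ℓ - r₁/ℓ)} ‖M(t) - M(r₁/ℓ + (1/(2n))(1 - r₂/ℓ - r₁/ℓ))‖² dt`,
and the infimum is achieved by `{M(r₁/ℓ + ((2j-1)/(2n))(1 - r₂/ℓ - r₁/ℓ)) : 1 ≤ j ≤ n}`. -/
theorem quantization_uniform_subsegment
    (A B : EuclideanSpace ℝ (Fin 2)) (hAB : A ≠ B) (ℓ r₁ r₂ : ℝ)
    (hℓ : ℓ = ‖B - A‖) (hr₁ : 0 ≤ r₁) (hr₂ : 0 ≤ r₂) (hr : r₁ + r₂ < ℓ)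
    (M : ℝ → EuclideanSpace ℝ (Fin 2)) (hM : ∀ t, M t = (1 - t) • A + t • B)
    (n : ℕ) (hn : 1 ≤ n)
    (μ : Measure (EuclideanSpace ℝ (Fin 2)))
    (hμ : μ = Measure.map M (volume.restrict (Set.Icc (r₁ / ℓ) (1 - r₂ / ℓ)))) :
    (∫ x, (⨅ a : ((Finset.Icc 1 n).image
          (fun j : ℕ => M (r₁ / ℓ + (2 * (j : ℝ) - 1) / (2 * n) * (1 - r₂ / ℓ - r₁ / ℓ))) :
          Finset (EuclideanSpace ℝ (Fin 2))),
        ‖x - (a : EuclideanSpace ℝ (Fin 2))‖ ^ 2) ∂μ)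
      = n * ∫ t in Set.Icc (r₁ / ℓ) (r₁ / ℓ + (1 / n) * (1 - r₂ / ℓ - r₁ / ℓ)),
          ‖M t - M (r₁ / ℓ + (1 / (2 * n)) * (1 - r₂ / ℓ - r₁ / ℓ))‖ ^ 2 ∧
    ∀ α : Finset (EuclideanSpace ℝ (Fin 2)), α.Nonempty → α.card ≤ n →
      (n : ℝ) * ∫ t in Set.Icc (r₁ / ℓ) (r₁ / ℓ + (1 / n) * (1 - r₂ / ℓ - r₁ / ℓ)),
          ‖M t - M (r₁ / ℓ + (1 / (2 * n)) * (1 - r₂ / ℓ - r₁ / ℓ))‖ ^ 2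
        ≤ ∫ x, (⨅ a : α, ‖x - (a : EuclideanSpace ℝ (Fin 2))‖ ^ 2) ∂μ :=
  quantization_uniform_subsegment_general A B hAB ℓ r₁ r₂ hℓ hr M hM n hn μ hμ
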